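/- Thiele's optimization method, Thiele's addition method, and Thiele's elimination method (each with an arbitrary satisfaction function f with nonnegative weights) all ignore full ballots: for every profile v, every number M of seats, and every N ∈ ℕ, the possible outcomes for the profile obtained from v by adding N full ballots (ballots whose candidate set is all of C) are exactly the possible outcomes for v itself. -/
import Mathlib


open Finset

/-- Total satisfaction `F(S) = Σ_σ v_σ · f(|σ ∩ S|)`. -/
noncomputable def thieleF {C : Type} [Fintype C] [DecidableEq C]
    (f : ℕ → ℝ) (v : Finset C → ℕ) (S : Finset C) : ℝ :=
  ∑ σ : Finset C, (v σ : ℝ) * f ((σ ∩ S).card)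

/-- `S` is a possible outcome of Thiele's optimization method with satisfaction
function `f` for `M` seats. -/
def ThieleOptOutcome {C : Type} [Fintype C] [DecidableEq C]
    (f : ℕ → ℝ) (v : Finset C → ℕ) (M : ℕ) (S : Finset C) : Prop :=
  S.card = M ∧ ∀ T : Finset C, T.card = M → thieleF f v T ≤ thieleF f v S

/-- Thiele addition score: the vote count of candidate `i` when the set of already
elected candidates is `E`; a ballot `σ ∋ i` counts `w (|σ ∩ E| + 1)`. -/
noncomputable def thAddScore {C : Type} [Fintype C] [DecidableEq C]
    (w : ℕ → ℝ) (v : Finset C → ℕ) (E : Finset C) (i : C) : ℝ :=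
  ∑ σ ∈ Finset.univ.filter (fun σ : Finset C => i ∈ σ), (v σ : ℝ) * w ((σ ∩ E).card + 1)

/-- `l` (most recently elected first) is a valid sequence of elections for Thiele's
addition method: each newly elected candidate is unelected and maximizes the score. -/
def thAddValid {C : Type} [Fintype C] [DecidableEq C]
    (w : ℕ → ℝ) (v : Finset C → ℕ) : List C → Prop
  | [] => True
  | i :: l => thAddValid w v l ∧ i ∉ l ∧
      ∀ j : C, j ∉ l → thAddScore w v l.toFinset j ≤ thAddScore w v l.toFinset i

/-- `S` is a possible outcome of Thiele's addition method for `M` seats. -/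
def ThieleAddOutcome {C : Type} [Fintype C] [DecidableEq C]
    (w : ℕ → ℝ) (v : Finset C → ℕ) (M : ℕ) (S : Finset C) : Prop :=
  ∃ l : List C, thAddValid w v l ∧ l.length = M ∧ l.toFinset = S

/-- Thiele elimination score: the vote count of candidate `i` when the set of
remaining candidates is `R`; a ballot `σ ∋ i` counts `w (|σ ∩ R|)`. -/
noncomputable def thElimScore {C : Type} [Fintype C] [DecidableEq C]
    (w : ℕ → ℝ) (v : Finset C → ℕ) (R : Finset C) (i : C) : ℝ :=
  ∑ σ ∈ Finset.univ.filter (fun σ : Finset C => i ∈ σ), (v σ : ℝ) * w ((σ ∩ R).card)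

/-- `l` (most recently eliminated first) is a valid sequence of eliminations for
Thiele's elimination method: each newly eliminated candidate is a remaining
candidate minimizing the elimination score. -/
def thElimValid {C : Type} [Fintype C] [DecidableEq C]
    (w : ℕ → ℝ) (v : Finset C → ℕ) : List C → Prop
  | [] => True
  | i :: l => thElimValid w v l ∧ i ∉ l ∧
      ∀ j : C, j ∉ l →
        thElimScore w v (Finset.univ \ l.toFinset) i ≤
          thElimScore w v (Finset.univ \ l.toFinset) j

/-- `S` is a possible outcome of Thiele's elimination method for `M` seats:
candidates can be eliminated one by one, by the rule, until exactly `S` remains. -/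
def ThieleElimOutcome {C : Type} [Fintype C] [DecidableEq C]
    (w : ℕ → ℝ) (v : Finset C → ℕ) (M : ℕ) (S : Finset C) : Prop :=
  ∃ l : List C, thElimValid w v l ∧ l.length = Fintype.card C - M ∧
    Finset.univ \ l.toFinset = S

/-- The satisfaction function `f(n) = Σ_{k=1}^n w_k` built from the weights `w`. -/
noncomputable def fromWeights (w : ℕ → ℝ) (n : ℕ) : ℝ := ∑ k ∈ Finset.Icc 1 n, w k

section Shift

variable {C : Type} [Fintype C] [DecidableEq C]

lemma thieleF_shift (f : ℕ → ℝ) (v : Finset C → ℕ) (N : ℕ) (S : Finset C) :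
    thieleF f (fun σ => if σ = Finset.univ then v σ + N else v σ) S
      = thieleF f v S + N * f S.card := by
  unfold thieleF
  have h : ∀ σ : Finset C,
      ((if σ = Finset.univ then v σ + N else v σ : ℕ) : ℝ) * f ((σ ∩ S).card)
      = (v σ : ℝ) * f ((σ ∩ S).card)
        + (if σ = Finset.univ then (N : ℝ) * f ((σ ∩ S).card) else 0) := by
    intro σ; split <;> push_cast <;> ring
  rw [Finset.sum_congr rfl (fun σ _ => h σ), Finset.sum_add_distrib]
  simp [Finset.univ_inter]

lemma thAddScore_shift (w : ℕ → ℝ) (v : Finset C → ℕ) (N : ℕ) (E : Finset C) (i : C) :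
    thAddScore w (fun σ => if σ = Finset.univ then v σ + N else v σ) E i
      = thAddScore w v E i + N * w (E.card + 1) := by
  unfold thAddScore
  have h : ∀ σ : Finset C,
      ((if σ = Finset.univ then v σ + N else v σ : ℕ) : ℝ) * w ((σ ∩ E).card + 1)
      = (v σ : ℝ) * w ((σ ∩ E).card + 1)
        + (if σ = Finset.univ then (N : ℝ) * w ((σ ∩ E).card + 1) else 0) := by
    intro σ; split <;> push_cast <;> ring
  rw [Finset.sum_congr rfl (fun σ _ => h σ), Finset.sum_add_distrib]
  have hu : (Finset.univ : Finset C) ∈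
      Finset.univ.filter (fun σ : Finset C => i ∈ σ) := by simp
  rw [Finset.sum_ite_eq' _ Finset.univ _, if_pos hu]
  simp [Finset.univ_inter]

lemma thElimScore_shift (w : ℕ → ℝ) (v : Finset C → ℕ) (N : ℕ) (R : Finset C) (i : C) :
    thElimScore w (fun σ => if σ = Finset.univ then v σ + N else v σ) R i
      = thElimScore w v R i + N * w R.card := by
  unfold thElimScore
  have h : ∀ σ : Finset C,
      ((if σ = Finset.univ then v σ + N else v σ : ℕ) : ℝ) * w ((σ ∩ R).card)
      = (v σ : ℝ) * w ((σ ∩ R).card)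
        + (if σ = Finset.univ then (N : ℝ) * w ((σ ∩ R).card) else 0) := by
    intro σ; split <;> push_cast <;> ring
  rw [Finset.sum_congr rfl (fun σ _ => h σ), Finset.sum_add_distrib]
  have hu : (Finset.univ : Finset C) ∈
      Finset.univ.filter (fun σ : Finset C => i ∈ σ) := by simp
  rw [Finset.sum_ite_eq' _ Finset.univ _, if_pos hu]
  simp [Finset.univ_inter]

lemma thAddValid_shift (w : ℕ → ℝ) (v : Finset C → ℕ) (N : ℕ) (l : List C) :
    thAddValid w (fun σ => if σ = Finset.univ then v σ + N else v σ) l ↔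
      thAddValid w v l := by
  induction l with
  | nil => simp [thAddValid]
  | cons i l ih =>
    simp only [thAddValid, ih]
    constructor
    · rintro ⟨h1, h2, h3⟩
      refine ⟨h1, h2, fun j hj => ?_⟩
      have := h3 j hj
      rw [thAddScore_shift, thAddScore_shift] at this; linarith
    · rintro ⟨h1, h2, h3⟩
      refine ⟨h1, h2, fun j hj => ?_⟩
      rw [thAddScore_shift, thAddScore_shift]
      have := h3 j hj; linarith

lemma thElimValid_shift (w : ℕ → ℝ) (v : Finset C → ℕ) (N : ℕ) (l : List C) :
    thElimValid w (fun σ => if σ = Finset.univ then v σ + N else v σ) l ↔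
      thElimValid w v l := by
  induction l with
  | nil => simp [thElimValid]
  | cons i l ih =>
    simp only [thElimValid, ih]
    constructor
    · rintro ⟨h1, h2, h3⟩
      refine ⟨h1, h2, fun j hj => ?_⟩
      have := h3 j hj
      rw [thElimScore_shift, thElimScore_shift] at this; linarith
    · rintro ⟨h1, h2, h3⟩
      refine ⟨h1, h2, fun j hj => ?_⟩
      rw [thElimScore_shift, thElimScore_shift]
      have := h3 j hj; linarith

end Shift

/-- Thiele's optimization, addition and elimination methods (with an arbitrary
satisfaction function with nonnegative weights) all ignore full ballots: adding `N`
ballots containing all of `C` does not change the possible outcomes. -/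
theorem stmt_10 {C : Type} [Fintype C] [DecidableEq C]
    (w : ℕ → ℝ) (hw : ∀ k, 0 ≤ w k)
    (v : Finset C → ℕ) (M N : ℕ) (hM1 : 1 ≤ M) (hM2 : M ≤ Fintype.card C) :
    ∀ S : Finset C,
      (ThieleOptOutcome (fromWeights w)
          (fun σ => if σ = Finset.univ then v σ + N else v σ) M S ↔
        ThieleOptOutcome (fromWeights w) v M S) ∧
      (ThieleAddOutcome w
          (fun σ => if σ = Finset.univ then v σ + N else v σ) M S ↔
        ThieleAddOutcome w v M S) ∧
      (ThieleElimOutcome w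
          (fun σ => if σ = Finset.univ then v σ + N else v σ) M S ↔
        ThieleElimOutcome w v M S) := by
  intro S
  refine ⟨?_, ?_, ?_⟩
  · unfold ThieleOptOutcome
    constructor
    · rintro ⟨hc, h⟩
      refine ⟨hc, fun T hT => ?_⟩
      have := h T hT
      rw [thieleF_shift, thieleF_shift, hT, hc] at this; linarith
    · rintro ⟨hc, h⟩
      refine ⟨hc, fun T hT => ?_⟩
      rw [thieleF_shift, thieleF_shift, hT, hc]
      have := h T hT; linarith
  · unfold ThieleAddOutcome
    exact exists_congr fun l => by rw [thAddValid_shift]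
  · unfold ThieleElimOutcome
    exact exists_congr fun l => by rw [thElimValid_shift]
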